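/- Let U be a finite set with |U| = k ≥ 1, let S₁,…,S_s be subsets of U, and let ℓ ≥ 1 be an integer. Let (G,w) be the weighted split graph whose vertex set is the disjoint union of {1,…,s} (set-vertices) and U (element-vertices), where the set-vertices are pairwise adjacent, the element-vertices are pairwise non-adjacent, and a set-vertex i is adjacent to an element-vertex x if and only if x ∉ S_i; every set-vertex has weight ℓ and every element-vertex has weight ℓ+1. Then there exists a subfamily of at most ℓ of the sets S₁,…,S_s whose union is U if and only if σ(G,w) ≤ s·ℓ + ℓ. -/

import Mathlib

open Finset

/-- A finset of vertices is independent (stable) in `G`. -/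
def IndepSet {V : Type*} (G : SimpleGraph V) (S : Finset V) : Prop :=
  ∀ u ∈ S, ∀ v ∈ S, ¬ G.Adj u v

/-- A proper coloring of the subgraph of `G` induced by `A`:
a partition of `A` into independent sets (the color classes). -/
def IsProperColoring {V : Type*} [DecidableEq V] (G : SimpleGraph V) {A : Finset V}
    (P : Finpartition A) : Prop :=
  ∀ S ∈ P.parts, IndepSet G S

/-- The weight of a coloring: the sum over color classes of the maximum weight in the class. -/
def colWeight {V : Type*} [DecidableEq V] {A : Finset V} (w : V → ℕ) (P : Finpartition A) : ℕ :=
  ∑ S ∈ P.parts, S.sup w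

/-- The weighted chromatic number of the subgraph of `G` induced by the vertex set `A`. -/
noncomputable def sigmaOn {V : Type*} [DecidableEq V] (G : SimpleGraph V) (w : V → ℕ)
    (A : Finset V) : ℕ :=
  sInf { n | ∃ P : Finpartition A, IsProperColoring G P ∧ n = colWeight w P }

/-- The weighted chromatic number `σ(G,w)`. -/
noncomputable def sigmaW {V : Type*} [Fintype V] [DecidableEq V] (G : SimpleGraph V)
    (w : V → ℕ) : ℕ :=
  sigmaOn G w Finset.univ

/-- An antimatching of `G`: a set of pairwise disjoint unordered pairs of distinct
non-adjacent vertices of `G` (equivalently, a matching of the complement of `G`). -/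
def IsAntimatching {V : Type*} (G : SimpleGraph V) (M : Finset (Sym2 V)) : Prop :=
  (∀ e ∈ M, e ∈ Gᶜ.edgeSet) ∧
  ∀ e ∈ M, ∀ f ∈ M, e ≠ f → ∀ x, x ∈ e → x ∉ f

/-- A maximum antimatching of `G`. -/
def IsMaxAntimatching {V : Type*} (G : SimpleGraph V) (M : Finset (Sym2 V)) : Prop :=
  IsAntimatching G M ∧ ∀ M' : Finset (Sym2 V), IsAntimatching G M' → M'.card ≤ M.card

/-- The set `V(M̄)` of vertices covered by the pairs of `M`. -/
def coveredVerts {V : Type*} [Fintype V] [DecidableEq V] (M : Finset (Sym2 V)) : Finset V :=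
  Finset.univ.filter fun v => ∃ e ∈ M, v ∈ e

/-- `G` is an interval graph: vertices can be assigned nonempty closed real intervals so that
two distinct vertices are adjacent iff their intervals intersect. -/
def IsIntervalGraph {V : Type*} (G : SimpleGraph V) : Prop :=
  ∃ f : V → ℝ × ℝ, (∀ v, (f v).1 ≤ (f v).2) ∧
    ∀ u v : V, G.Adj u v ↔
      u ≠ v ∧ (Set.Icc (f u).1 (f u).2 ∩ Set.Icc (f v).1 (f v).2).Nonempty

/-!
A cover `F` gives a coloring: color each element by a set of `F` containing it, and each set by
itself. The class of a set has weight `ℓ + 1` if it received an element and `ℓ` otherwise, in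
total at most `s * ℓ + #F`.

Conversely, in a proper coloring the set-vertices lie in pairwise distinct classes, each of weight
at least `ℓ`, and the class of a set `i` can only receive elements of `S i`. A class without a
set-vertex would cost another `ℓ + 1`, so a coloring of weight at most `s * ℓ + ℓ` puts every
element into the class of a set containing it, and at most `ℓ` of these classes have weight
`ℓ + 1`: their sets form a cover.
-/

section WeightedColoring

variable {V : Type*} [DecidableEq V] (G : SimpleGraph V) (w : V → ℕ)

theorem sigmaOn_le_colWeight {A : Finset V} {P : Finpartition A} (hP : IsProperColoring G P) :
    sigmaOn G w A ≤ colWeight w P :=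
  Nat.sInf_le ⟨P, hP, rfl⟩

theorem isProperColoring_bot (A : Finset V) : IsProperColoring G (⊥ : Finpartition A) := by
  intro T hT u hu v hv
  obtain ⟨a, -, rfl⟩ := Finpartition.mem_bot_iff.1 hT
  rw [mem_singleton] at hu hv
  subst hu hv
  exact G.irrefl

theorem exists_isProperColoring_colWeight_eq_sigmaOn (A : Finset V) :
    ∃ P : Finpartition A, IsProperColoring G P ∧ colWeight w P = sigmaOn G w A := by
  have hne : {n | ∃ P : Finpartition A, IsProperColoring G P ∧ n = colWeight w P}.Nonempty :=
    ⟨_, ⊥, isProperColoring_bot G A, rfl⟩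
  obtain ⟨P, hP, h⟩ := Nat.sInf_mem hne
  exact ⟨P, hP, h.symm⟩

theorem IsProperColoring.part_ne_of_adj {A : Finset V} {P : Finpartition A}
    (hP : IsProperColoring G P) {u v : V} (hu : u ∈ A) (hv : v ∈ A) (huv : G.Adj u v) :
    P.part u ≠ P.part v := fun h =>
  hP _ (P.part_mem.2 hu) u (P.mem_part hu) v (h ▸ P.mem_part hv) huv

theorem sigmaW_le_sum_sup_colorClass [Fintype V] {α : Type*} [Fintype α] [DecidableEq α]
    (C : G.Coloring α) : sigmaW G w ≤ ∑ c, (univ.filter (C · = c)).sup w := by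
  classical
  let P := Finpartition.ofSetoid (Setoid.ker C)
  have hpart : ∀ T ∈ P.parts, ∃ c, T = univ.filter (C · = c) := by
    intro T hT
    obtain ⟨a, ha⟩ := P.nonempty_of_mem_parts hT
    refine ⟨C a, ?_⟩
    ext v
    rw [← P.part_eq_of_mem hT ha, Finpartition.mem_part_ofSetoid_iff_rel]
    simp [eq_comm]
  have hP : IsProperColoring G P := by
    intro T hT u hu v hv huv
    obtain ⟨c, rfl⟩ := hpart T hT
    rw [mem_filter] at hu hv
    exact C.valid huv (hu.2.trans hv.2.symm)
  calc sigmaW G w ≤ colWeight w P := sigmaOn_le_colWeight G w hP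
    _ ≤ ∑ T ∈ univ.image fun c => univ.filter (C · = c), T.sup w :=
        sum_le_sum_of_subset fun T hT => by
          obtain ⟨c, rfl⟩ := hpart T hT
          exact mem_image_of_mem _ (mem_univ c)
    _ ≤ ∑ c, (univ.filter (C · = c)).sup w := sum_image_le_of_nonneg fun _ _ => Nat.zero_le _

end WeightedColoring

theorem sum_add_ite_mem {ι : Type*} [Fintype ι] [DecidableEq ι] (a : ℕ) (F : Finset ι) :
    ∑ i, (a + if i ∈ F then 1 else 0) = Fintype.card ι * a + #F := by
  simp [sum_add_distrib]

section SetCover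

variable {U : Type*} {s : ℕ}

def setCoverGraph (S : Fin s → Finset U) : SimpleGraph (Fin s ⊕ U) :=
  SimpleGraph.fromRel <|
    Sum.elim (fun i => Sum.elim (fun _ => True) fun x => x ∉ S i) fun _ _ => False

variable (S : Fin s → Finset U)

@[simp]
theorem setCoverGraph_adj_inl_inl {i j : Fin s} :
    (setCoverGraph S).Adj (.inl i) (.inl j) ↔ i ≠ j := by
  simp [setCoverGraph]

@[simp]
theorem setCoverGraph_adj_inl_inr {i : Fin s} {x : U} :
    (setCoverGraph S).Adj (.inl i) (.inr x) ↔ x ∉ S i := by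
  simp [setCoverGraph]

@[simp]
theorem setCoverGraph_adj_inr_inl {i : Fin s} {x : U} :
    (setCoverGraph S).Adj (.inr x) (.inl i) ↔ x ∉ S i := by
  simp [setCoverGraph]

@[simp]
theorem setCoverGraph_not_adj_inr_inr {x y : U} : ¬ (setCoverGraph S).Adj (.inr x) (.inr y) := by
  simp [setCoverGraph]

variable [Fintype U] [DecidableEq U] (ℓ : ℕ)

local notation "w" => (Sum.elim (fun _ => ℓ) fun _ => ℓ + 1 : Fin s ⊕ U → ℕ)

theorem sigmaW_setCoverGraph_le_of_cover {F : Finset (Fin s)} (hF : ∀ x, ∃ i ∈ F, x ∈ S i) :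
    sigmaW (setCoverGraph S) w ≤ s * ℓ + #F := by
  choose g hgF hgS using hF
  let C : (setCoverGraph S).Coloring (Fin s) := .mk (Sum.elim id g) <| by
    rintro (i | x) (j | y) h <;>
      simp only [Sum.elim_inl, Sum.elim_inr, id, setCoverGraph_adj_inl_inl,
        setCoverGraph_adj_inl_inr, setCoverGraph_adj_inr_inl, setCoverGraph_not_adj_inr_inr] at h ⊢
    · exact h
    · exact fun hij => h (hij ▸ hgS y)
    · exact fun hij => h (hij ▸ hgS x)
  have hclass (i : Fin s) : (univ.filter (C · = i)).sup w ≤ ℓ + if i ∈ F then 1 else 0 := by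
    refine Finset.sup_le fun v hv => ?_
    rcases v with j | x
    · simp
    · obtain rfl : g x = i := (mem_filter.1 hv).2
      simp [hgF x]
  calc sigmaW (setCoverGraph S) w ≤ ∑ i, (univ.filter (C · = i)).sup w :=
        sigmaW_le_sum_sup_colorClass _ _ C
    _ ≤ ∑ i : Fin s, (ℓ + if i ∈ F then 1 else 0) := sum_le_sum fun i _ => hclass i
    _ = s * ℓ + #F := by rw [sum_add_ite_mem, Fintype.card_fin]

theorem exists_cover_of_isProperColoring {P : Finpartition (univ : Finset (Fin s ⊕ U))}
    (hP : IsProperColoring (setCoverGraph S) P) (hw : colWeight w P ≤ s * ℓ + ℓ) :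
    ∃ F : Finset (Fin s), #F ≤ ℓ ∧ ∀ x, ∃ i ∈ F, x ∈ S i := by
  let cls : Fin s → Finset (Fin s ⊕ U) := fun i => P.part (.inl i)
  let F := univ.filter fun i => ∃ x, .inr x ∈ cls i
  have hcls_inj : Function.Injective cls := fun i j h => by
    by_contra hij
    exact hP.part_ne_of_adj _ (mem_univ _) (mem_univ _)
      ((setCoverGraph_adj_inl_inl S).2 hij) h
  have hcls_sub : univ.image cls ⊆ P.parts :=
    fun _ hT => by
      obtain ⟨i, -, rfl⟩ := mem_image.1 hT
      exact P.part_mem.2 (mem_univ _)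
  have hcls_weight : s * ℓ + #F ≤ ∑ T ∈ univ.image cls, T.sup w := by
    rw [sum_image hcls_inj.injOn]
    calc s * ℓ + #F = ∑ i : Fin s, (ℓ + if i ∈ F then 1 else 0) := by
          rw [sum_add_ite_mem, Fintype.card_fin]
      _ ≤ ∑ i, (cls i).sup w := sum_le_sum fun i _ => ?_
    split_ifs with hi
    · obtain ⟨x, hx⟩ := (mem_filter.1 hi).2
      exact le_sup (f := w) hx
    · exact (add_zero ℓ).trans_le (le_sup (f := w) (P.mem_part (mem_univ (Sum.inl i))))
  have hcover (x : U) : P.part (.inr x) ∈ univ.image cls := by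
    by_contra hx
    have hsub : insert (P.part (.inr x)) (univ.image cls) ⊆ P.parts :=
      insert_subset (P.part_mem.2 (mem_univ _)) hcls_sub
    have := calc ℓ + 1 + (s * ℓ + #F)
        ≤ (P.part (.inr x)).sup w + ∑ T ∈ univ.image cls, T.sup w :=
          add_le_add (le_sup (f := w) (P.mem_part (mem_univ (Sum.inr x)))) hcls_weight
      _ = ∑ T ∈ insert (P.part (.inr x)) (univ.image cls), T.sup w := (sum_insert hx).symm
      _ ≤ colWeight w P := sum_le_sum_of_subset hsub
    omega
  refine ⟨F, ?_, fun x => ?_⟩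
  · have := (hcls_weight.trans (sum_le_sum_of_subset hcls_sub)).trans hw
    omega
  · obtain ⟨i, -, hi⟩ := mem_image.1 (hcover x)
    have hx : Sum.inr x ∈ cls i := hi ▸ P.mem_part (mem_univ _)
    refine ⟨i, mem_filter.2 ⟨mem_univ i, x, hx⟩, ?_⟩
    by_contra hxS
    exact hP _ (P.part_mem.2 (mem_univ _)) _ (P.mem_part (mem_univ _)) _ hx
      ((setCoverGraph_adj_inl_inr S).2 hxS)

theorem exists_cover_iff_sigmaW_setCoverGraph_le :
    (∃ F : Finset (Fin s), #F ≤ ℓ ∧ ∀ x, ∃ i ∈ F, x ∈ S i) ↔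
      sigmaW (setCoverGraph S) w ≤ s * ℓ + ℓ := by
  constructor
  · rintro ⟨F, hF, hcover⟩
    exact (sigmaW_setCoverGraph_le_of_cover S ℓ hcover).trans (by omega)
  · intro h
    obtain ⟨P, hP, hPw⟩ := exists_isProperColoring_colWeight_eq_sigmaOn (setCoverGraph S) w univ
    exact exists_cover_of_isProperColoring S ℓ hP (hPw.trans_le h)

end SetCover

theorem setCover_iff_sigma_le
    {U : Type*} [Fintype U] [DecidableEq U]
    (s : ℕ) (S : Fin s → Finset U)
    (ℓ : ℕ) :
    (∃ F : Finset (Fin s), F.card ≤ ℓ ∧ ∀ x : U, ∃ i ∈ F, x ∈ S i) ↔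
      sigmaW
        (SimpleGraph.fromRel fun a b : Fin s ⊕ U =>
          match a, b with
          | Sum.inl _, Sum.inl _ => True
          | Sum.inl i, Sum.inr x => x ∉ S i
          | _, _ => False)
        (Sum.elim (fun _ => ℓ) fun _ => ℓ + 1) ≤ s * ℓ + ℓ := by
  convert exists_cover_iff_sigmaW_setCoverGraph_le S ℓ using 3
  ext (i | x) (j | y) <;> simp [setCoverGraph]
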